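/- Let G be a finite DAG on vertex set V with level l(G) and level sets V_s. Then every weighted adjacency matrix W of G satisfies rank(W) ≤ |V| − max{|V_s| : 0 ≤ s ≤ l(G)}. -/

import Mathlib

/-- There is a directed path with `ℓ` edges starting at `X` in the graph with edge
relation `E`. -/
def HasPathFrom {V : Type*} (E : V → V → Prop) (X : V) (ℓ : ℕ) : Prop :=
  ∃ p : Fin (ℓ + 1) → V, p 0 = X ∧ ∀ i : Fin ℓ, E (p i.castSucc) (p i.succ)

/-- The level of a vertex `X`: the number of edges in a longest directed path
starting at `X`. -/
noncomputable def level {V : Type*} (E : V → V → Prop) (X : V) : ℕ :=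
  sSup {ℓ : ℕ | HasPathFrom E X ℓ}

/-- The level of the graph: the number of edges in a longest directed path. -/
noncomputable def glevel {V : Type*} [Fintype V] (E : V → V → Prop) : ℕ :=
  Finset.univ.sup fun X : V => level E X

/-- The set of vertices of level `s`. -/
def levelSet {V : Type*} (E : V → V → Prop) (s : ℕ) : Set V :=
  {X | level E X = s}

section aux

variable {V : Type*} {E : V → V → Prop}

lemma hasPathFrom_zero (X : V) : HasPathFrom E X 0 :=
  ⟨fun _ => X, rfl, fun i => i.elim0⟩

lemma transGen_of_path {ℓ : ℕ} {p : Fin (ℓ + 1) → V}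
    (hp : ∀ i : Fin ℓ, E (p i.castSucc) (p i.succ)) :
    ∀ (n a : ℕ) (h1 : a < ℓ + 1) (h2 : a + n + 1 < ℓ + 1),
      Relation.TransGen E (p ⟨a, h1⟩) (p ⟨a + n + 1, h2⟩) := by
  intro n
  induction n with
  | zero =>
    intro a h1 h2
    exact Relation.TransGen.single (hp ⟨a, by omega⟩)
  | succ n ih =>
    intro a h1 h2
    exact Relation.TransGen.tail (ih a h1 (by omega)) (hp ⟨a + n + 1, by omega⟩)

lemma path_length_lt [Fintype V] (hacyc : ∀ X : V, ¬ Relation.TransGen E X X)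
    {X : V} {ℓ : ℕ} (h : HasPathFrom E X ℓ) : ℓ < Fintype.card V := by
  by_contra hle
  push_neg at hle
  obtain ⟨p, -, hp⟩ := h
  have hcard : Fintype.card V < Fintype.card (Fin (ℓ + 1)) := by simp; omega
  obtain ⟨i, j, hne, hij⟩ := Fintype.exists_ne_map_eq_of_card_lt p hcard
  rcases Ne.lt_or_gt hne with hlt | hlt
  · have := transGen_of_path hp (j.val - i.val - 1) i.val i.isLt (by omega)
    rw [Fin.eta] at this
    have hj : (⟨i.val + (j.val - i.val - 1) + 1, by omega⟩ : Fin (ℓ+1)) = j := by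
      ext; simp; omega
    rw [hj, ← hij] at this
    exact hacyc _ this
  · have := transGen_of_path hp (i.val - j.val - 1) j.val j.isLt (by omega)
    rw [Fin.eta] at this
    have hi : (⟨j.val + (i.val - j.val - 1) + 1, by omega⟩ : Fin (ℓ+1)) = i := by
      ext; simp; omega
    rw [hi, hij] at this
    exact hacyc _ this

lemma bddAbove_paths [Fintype V] (hacyc : ∀ X : V, ¬ Relation.TransGen E X X) (X : V) :
    BddAbove {ℓ : ℕ | HasPathFrom E X ℓ} :=
  ⟨Fintype.card V, fun _ h => (path_length_lt hacyc h).le⟩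

lemma level_lt_of_edge [Fintype V] (hacyc : ∀ X : V, ¬ Relation.TransGen E X X)
    {X Y : V} (hXY : E X Y) : level E Y < level E X := by
  set ℓ := level E Y with hℓ
  have h0 : (0 : ℕ) ∈ {ℓ : ℕ | HasPathFrom E Y ℓ} := hasPathFrom_zero Y
  have hy : ℓ ∈ {ℓ : ℕ | HasPathFrom E Y ℓ} :=
    Nat.sSup_mem ⟨0, h0⟩ (bddAbove_paths hacyc Y)
  obtain ⟨p, hp0, hp⟩ := hy
  have hx : HasPathFrom E X (ℓ + 1) := by
    refine ⟨Fin.cases X p, by simp, ?_⟩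
    intro i
    induction i using Fin.cases with
    | zero =>
      show E (Fin.cases X p (0 : Fin (ℓ+1)).castSucc) (Fin.cases X p (0 : Fin (ℓ+1)).succ)
      rw [Fin.castSucc_zero]
      simp only [Fin.cases_zero]
      have : Fin.cases (motive := fun _ => V) X p ((0 : Fin (ℓ+1)).succ) = p 0 :=
        Fin.cases_succ 0
      rw [this, hp0]
      exact hXY
    | succ j =>
      show E (Fin.cases X p (j.succ).castSucc) (Fin.cases X p (j.succ).succ)
      rw [← Fin.succ_castSucc]
      have e1 : Fin.cases (motive := fun _ => V) X p ((j.castSucc).succ) = p j.castSucc :=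
        Fin.cases_succ _
      have e2 : Fin.cases (motive := fun _ => V) X p ((j.succ).succ) = p j.succ :=
        Fin.cases_succ _
      rw [e1, e2]
      exact hp j
  have : ℓ + 1 ≤ level E X := le_csSup (bddAbove_paths hacyc X) hx
  omega

end aux


/-- Every weighted adjacency matrix of a finite DAG has rank at most
`|V| - max{|V_s| : 0 ≤ s ≤ l(G)}`. -/
theorem rank_le_card_sub_max_levelSet
    {V : Type*} [Fintype V] [DecidableEq V] (E : V → V → Prop)
    (hacyc : ∀ X : V, ¬ Relation.TransGen E X X)
    (W : Matrix V V ℝ) (hW : ∀ X Y : V, W X Y ≠ 0 ↔ E X Y) :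
    W.rank ≤ Fintype.card V -
      (Finset.Icc 0 (glevel E)).sup (fun s => (levelSet E s).ncard) := by
  classical
  obtain ⟨s, -, hs⟩ := Finset.exists_mem_eq_sup (Finset.Icc 0 (glevel E))
    ⟨0, by simp⟩ (fun s => (levelSet E s).ncard)
  rw [hs]
  set SA : Finset V := Finset.univ.filter (fun X => level E X < s) with hSA
  set SB : Finset V := Finset.univ.filter (fun X => level E X = s) with hSB
  set SC : Finset V := Finset.univ.filter (fun X => s < level E X) with hSC
  have memSA : ∀ x : V, x ∈ SA ↔ level E x < s := fun x => by simp [hSA]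
  have memSC : ∀ x : V, x ∈ SC ↔ s < level E x := fun x => by simp [hSC]
  have hncard : (levelSet E s).ncard = SB.card := by
    rw [Set.ncard_eq_toFinset_card']
    congr 1
    ext x
    simp [levelSet, hSB]
    exact @Set.mem_toFinset _ (levelSet E s) _ x
  set P : Matrix V ({a : V // a ∈ SA} ⊕ {c : V // c ∈ SC}) ℝ := fun X i =>
    Sum.rec (fun a => W X a.val) (fun c => if (c.val : V) = X then 1 else 0) i with hP
  set Q : Matrix ({a : V // a ∈ SA} ⊕ {c : V // c ∈ SC}) V ℝ := fun i Y =>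
    Sum.rec (fun a => if (a.val : V) = Y then 1 else 0)
      (fun c => if level E Y < s then 0 else W c.val Y) i with hQ
  have hfact : W = P * Q := by
    ext X Y
    rw [Matrix.mul_apply, Fintype.sum_sum_type]
    by_cases hY : level E Y < s
    · have h2 : ∑ c : {c : V // c ∈ SC}, P X (Sum.inr c) * Q (Sum.inr c) Y = 0 :=
        Finset.sum_eq_zero fun c _ => by simp [hQ, hY]
      have hYA : Y ∈ SA := (memSA Y).mpr hY
      have h1 : ∑ a : {a : V // a ∈ SA}, P X (Sum.inl a) * Q (Sum.inl a) Y = W X Y := by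
        rw [Finset.sum_eq_single_of_mem (⟨Y, hYA⟩ : {a : V // a ∈ SA}) (Finset.mem_univ _)]
        · simp [hP, hQ]
        · intro b _ hb
          have hbY : (b.val : V) ≠ Y := fun h => hb (Subtype.ext h)
          simp [hP, hQ, hbY]
      rw [h1, h2, add_zero]
    · have h1 : ∑ a : {a : V // a ∈ SA}, P X (Sum.inl a) * Q (Sum.inl a) Y = 0 := by
        refine Finset.sum_eq_zero fun a _ => ?_
        have haY : (a.val : V) ≠ Y := by
          intro h
          have := (memSA a.val).mp a.property
          rw [h] at this
          exact hY this
        simp [hP, hQ, haY]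
      rw [h1, zero_add]
      by_cases hX : X ∈ SC
      · rw [Finset.sum_eq_single_of_mem (⟨X, hX⟩ : {c : V // c ∈ SC}) (Finset.mem_univ _)]
        · simp [hP, hQ, hY]
        · intro b _ hb
          have hbX : (b.val : V) ≠ X := fun h => hb (Subtype.ext h)
          simp [hP, hbX]
      · have hWXY : W X Y = 0 := by
          by_contra hne
          have hE := (hW X Y).mp hne
          have hlt := level_lt_of_edge hacyc hE
          have := (memSC X).not.mp hX
          omega
        rw [hWXY]
        refine (Finset.sum_eq_zero fun c _ => ?_).symm
        have hcX : (c.val : V) ≠ X := fun h => hX (h ▸ c.property)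
        simp [hP, hcX]
  have hrank : W.rank ≤ SA.card + SC.card := by
    rw [hfact]
    refine (Matrix.rank_mul_le_left P Q).trans ?_
    have := Matrix.rank_le_card_width P
    simpa using this
  have hpart : SA.card + SB.card + SC.card = Fintype.card V := by
    have huniv : SA ∪ SB ∪ SC = Finset.univ := by
      ext x; simp [hSA, hSB, hSC]; omega
    have d1 : Disjoint SA SB := by
      rw [Finset.disjoint_left]; intro x hx hx'
      simp [hSA] at hx; simp [hSB] at hx'; omega
    have d2 : Disjoint (SA ∪ SB) SC := by
      rw [Finset.disjoint_left]; intro x hx hx'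
      simp [hSA, hSB] at hx; simp [hSC] at hx'; omega
    rw [← Finset.card_univ, ← huniv, Finset.card_union_of_disjoint d2,
      Finset.card_union_of_disjoint d1]
  omega
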